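/- Let H : Fin 3 → Fin 3 → Matrix (Fin 2) (Fin 2) ℝ be defined by H i j = identity matrix for i ≠ j, H 1 1 = H 2 2 = diagonal(1, −1), and H 3 3 = diagonal(−1, 1); let v = (1,1) and u = (1,−1) in ℝ². Then for every choice of transmitted scalars x : Fin 3 → ℝ and every receiver i, u · (Σ_{j=1}^{3} (H i j)·(x j • v)) = c_i · x i, where c₁ = c₂ = 2 and c₃ = −2; in particular each receiver recovers its own symbol free of interference from the other two transmitters. -/

import Mathlib

/-!
Every cross channel `H i j` (`i ≠ j`) is the identity, so all interference arrives along the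
beam `v = (1,1)`, which the zero-forcing vector `u = (1,-1)` annihilates. The direct channels
`diag(±1, ∓1)` rotate `v` onto `±u`, so the projection keeps the wanted symbol with gain
`±(u ⬝ᵥ u) = ±2`.
-/

open Matrix

/-- The two-carrier channel matrices of the counterexample:
`H i j = I` for `i ≠ j`, `H 1 1 = H 2 2 = diag(1,-1)`, `H 3 3 = diag(-1,1)`
(users `1,2,3` are indexed by `0,1,2 : Fin 3`). -/
def chan : Fin 3 → Fin 3 → Matrix (Fin 2) (Fin 2) ℝ :=
  ![![Matrix.diagonal ![1, -1], 1, 1],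
    ![1, Matrix.diagonal ![1, -1], 1],
    ![1, 1, Matrix.diagonal ![-1, 1]]]

theorem dotProduct_sum_mulVec_smul_of_interference_orthogonal {ι m R : Type*}
    [Fintype ι] [Fintype m] [CommSemiring R] (H : ι → Matrix m m R) (u v : m → R)
    (x : ι → R) (i : ι) (h_orth : ∀ j, j ≠ i → u ⬝ᵥ (H j *ᵥ v) = 0) :
    u ⬝ᵥ ∑ j, H j *ᵥ (x j • v) = (u ⬝ᵥ (H i *ᵥ v)) * x i := by
  simp only [dotProduct_sum, mulVec_smul, dotProduct_smul, smul_eq_mul]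
  rw [Finset.sum_eq_single i (fun j _ hji => by rw [h_orth j hji, mul_zero])
    (fun hi => absurd (Finset.mem_univ i) hi)]
  exact mul_comm _ _

lemma chan_of_ne {i j : Fin 3} (h : i ≠ j) : chan i j = 1 := by
  fin_cases i <;> fin_cases j <;> first | exact absurd rfl h | rfl

lemma dotProduct_chan_mulVec_of_ne {i j : Fin 3} (h : i ≠ j) :
    ![1, -1] ⬝ᵥ (chan i j *ᵥ ![1, 1]) = (0 : ℝ) := by
  rw [chan_of_ne h, one_mulVec]
  simp [dotProduct, Fin.sum_univ_two]

lemma dotProduct_chan_self_mulVec (i : Fin 3) :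
    ![1, -1] ⬝ᵥ (chan i i *ᵥ ![1, 1]) = (![2, 2, -2] i : ℝ) := by
  fin_cases i <;> simp [chan, dotProduct, mulVec_diagonal, Fin.sum_univ_two] <;> norm_num

/-- Noiseless core of the achievability of 3/2 degrees of freedom: each transmitter `j`
beamforms its symbol `x j` along `v = (1,1)`; projecting the received sum onto the
zero-forcing vector `u = (1,-1)` recovers `c i · x i` free of interference,
with `c = (2, 2, -2)`. -/
theorem zero_forcing_recovers_symbol :
    let v : Fin 2 → ℝ := ![1, 1]
    let u : Fin 2 → ℝ := ![1, -1]
    let c : Fin 3 → ℝ := ![2, 2, -2]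
    ∀ (x : Fin 3 → ℝ) (i : Fin 3),
      u ⬝ᵥ (∑ j : Fin 3, (chan i j).mulVec (x j • v)) = c i * x i := by
  intro v u c x i
  rw [dotProduct_sum_mulVec_smul_of_interference_orthogonal (chan i) u v x i
    (fun j hji => dotProduct_chan_mulVec_of_ne hji.symm), dotProduct_chan_self_mulVec]
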